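/- Let n ≥ 2, let G be a simple graph on vertex set Fin n which is a tree, and let N be an n×n matrix over ℤ with entries in {0,1} such that N + Nᵀ equals the adjacency matrix of G and N² = 0 (a bipartite orientation of G). Set C = I − N and φ(X) = det(X•C + Cᵀ) ∈ ℤ[X]. Then φ.coeff(n−1) = 1 and φ.coeff(n−2) = 1 − Σ_{i} C(d_i − 1, 2), where d_i is the degree of vertex i in G. -/

import Mathlib

/-! Since `N² = 0`, the matrix `C = 1 - N` has inverse `1 + N` and determinant `1`, so `φ` is the
characteristic polynomial of `-D` with `D = (1 + N)(1 - Nᵀ)`. Its coefficients of `X^(n-1)` and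
`X^(n-2)` are `tr D` and `((tr D)² - tr D²) / 2`, and `tr D = n - tr P`,
`tr D² = n - 4 tr P + tr P²` for `P = N Nᵀ`. With `A = N + Nᵀ` the adjacency matrix,
`A² = N Nᵀ + Nᵀ N`, so `tr P = tr A² / 2 = n - 1` and `tr P² = tr A⁴ / 2`. Finally `(A²)ᵢⱼ` is
the number of common neighbours of `i` and `j`, which is at most `1` for `i ≠ j` in a tree, so
`tr A⁴ = ∑ᵢⱼ (A²)ᵢⱼ² = 2 ∑ dᵢ² - ∑ dᵢ`. -/

open Polynomial Matrix Finset

namespace Polynomial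

variable {R : Type*} [CommRing R]

theorem coeff_comp_neg_X (p : R[X]) (k : ℕ) :
    (p.comp (-X)).coeff k = (-1) ^ k * p.coeff k := by
  induction p using Polynomial.induction_on' with
  | add p q hp hq => simp [add_comp, hp, hq, mul_add]
  | monomial n a =>
    rw [← C_mul_X_pow_eq_monomial, mul_comp, C_comp, X_pow_comp, neg_pow, ← C_1, ← C_neg,
      ← C_pow, ← mul_assoc, ← C_mul, coeff_C_mul_X_pow, coeff_C_mul_X_pow]
    split_ifs with h <;> simp [h, mul_comm]

end Polynomial

namespace Matrix

variable {R : Type*} [CommRing R] {m : Type*} [Fintype m] [DecidableEq m]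

theorem charpolyRev_comp (M : Matrix m m R) (q : R[X]) :
    M.charpolyRev.comp q = det (1 - q • M.map C) := by
  rw [comp_eq_aeval, charpolyRev, AlgHom.map_det]
  congr 1
  ext i j : 1
  simp only [AlgHom.mapMatrix_apply, map_apply, sub_apply, smul_apply, one_apply, smul_eq_mul,
    map_sub, map_one, map_mul, aeval_X, aeval_C, algebraMap_eq]

theorem charpolyRev_mul_comp_neg_X (M : Matrix m m R) :
    M.charpolyRev * M.charpolyRev.comp (-X) = expand R 2 (M * M).charpolyRev := by
  rw [expand_eq_comp_X_pow, charpolyRev_comp, charpolyRev_comp, charpolyRev, ← det_mul,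
    Matrix.map_mul]
  congr 1
  rw [neg_smul, sub_neg_eq_add, sub_mul, mul_add, mul_add, smul_mul_smul, ← pow_two]
  noncomm_ring

theorem two_mul_coeff_two_charpolyRev (M : Matrix m m R) :
    2 * M.charpolyRev.coeff 2 = M.trace ^ 2 - (M * M).trace := by
  have h := congr_arg (coeff · 2) (charpolyRev_mul_comp_neg_X M)
  simp only [coeff_mul, Finset.Nat.antidiagonal_succ, Finset.Nat.antidiagonal_zero] at h
  have h2 : (expand R 2 (M * M).charpolyRev).coeff 2 = (M * M).charpolyRev.coeff 1 :=
    coeff_expand_mul' two_pos _ 1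
  simp [coeff_comp_neg_X, h2, coeff_zero_eq_eval_zero] at h
  linear_combination h

theorem two_mul_charpoly_coeff_card_sub_two (M : Matrix m m R) (hm : 2 ≤ Fintype.card m) :
    2 * M.charpoly.coeff (Fintype.card m - 2) = M.trace ^ 2 - (M * M).trace := by
  nontriviality R
  rw [← two_mul_coeff_two_charpolyRev, ← reverse_charpoly, coeff_reverse,
    charpoly_natDegree_eq_dim, revAt_le hm]

theorem det_one_sub_of_isNilpotent [IsReduced R] {N : Matrix m m R} (hN : IsNilpotent N) :
    det (1 - N) = 1 := by
  have h := (isNilpotent_charpoly_sub_pow_of_isNilpotent hN).map (evalRingHom 1)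
  simp only [map_sub, coe_evalRingHom, eval_charpoly, eval_pow, eval_X, one_pow,
    scalar_apply, diagonal_one] at h
  exact sub_eq_zero.mp h.eq_zero

theorem det_X_smul_add_mul (A D : Matrix m m R) :
    det ((X : R[X]) • A.map C + (A * D).map C) = C A.det * (-D).charpoly := by
  rw [charpoly, charmatrix, RingHom.map_det, ← det_mul]
  congr 1
  rw [RingHom.mapMatrix_apply, RingHom.mapMatrix_apply, Matrix.map_neg, sub_neg_eq_add, mul_add,
    Matrix.map_mul, scalar_apply, ← smul_one_eq_diagonal, Matrix.mul_smul, mul_one]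
  simp

theorem trace_one_add_mul_one_sub_transpose (N : Matrix m m R) :
    trace ((1 + N) * (1 - Nᵀ)) = Fintype.card m - trace (N * Nᵀ) := by
  simp only [add_mul, mul_sub, one_mul, mul_one, trace_add, trace_sub, trace_one, trace_transpose]
  ring

section SquareZero

variable {N : Matrix m m R}

theorem add_transpose_mul_self (hN : N * N = 0) :
    (N + Nᵀ) * (N + Nᵀ) = N * Nᵀ + Nᵀ * N := by
  have hNT : Nᵀ * Nᵀ = 0 := by rw [← transpose_mul, hN, transpose_zero]
  rw [add_mul, mul_add, mul_add, hN, hNT, zero_add, add_zero, add_comm]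

theorem trace_add_transpose_mul_self (hN : N * N = 0) :
    trace ((N + Nᵀ) * (N + Nᵀ)) = 2 * trace (N * Nᵀ) := by
  rw [add_transpose_mul_self hN, trace_add, trace_mul_comm Nᵀ, two_mul]

theorem trace_add_transpose_mul_self_sq (hN : N * N = 0) :
    trace ((N + Nᵀ) * (N + Nᵀ) * ((N + Nᵀ) * (N + Nᵀ))) =
      2 * trace (N * Nᵀ * (N * Nᵀ)) := by
  have hNT : Nᵀ * Nᵀ = 0 := by rw [← transpose_mul, hN, transpose_zero]
  have hPQ : N * Nᵀ * (Nᵀ * N) = 0 := by simp [← mul_assoc, mul_assoc _ Nᵀ, hNT]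
  have hQP : Nᵀ * N * (N * Nᵀ) = 0 := by simp [← mul_assoc, mul_assoc _ N, hN]
  rw [add_transpose_mul_self hN, add_mul, mul_add, mul_add, hPQ, hQP, add_zero, zero_add,
    trace_add, two_mul]
  congr 1
  rw [mul_assoc, trace_mul_comm, mul_assoc, mul_assoc, mul_assoc]

theorem trace_one_add_mul_one_sub_transpose_sq (hN : N * N = 0) :
    trace ((1 + N) * (1 - Nᵀ) * ((1 + N) * (1 - Nᵀ))) =
      Fintype.card m - 4 * trace (N * Nᵀ) + trace (N * Nᵀ * (N * Nᵀ)) := by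
  have hNT : Nᵀ * Nᵀ = 0 := by rw [← transpose_mul, hN, transpose_zero]
  have hexp : (1 + N) * (1 - Nᵀ) * ((1 + N) * (1 - Nᵀ)) =
      1 + 2 • N - 2 • Nᵀ - 3 • (N * Nᵀ) - Nᵀ * N - N * Nᵀ * N + Nᵀ * N * Nᵀ
        + N * Nᵀ * (N * Nᵀ) + N * N - N * N * Nᵀ + Nᵀ * Nᵀ + N * (Nᵀ * Nᵀ) := by
    noncomm_ring
  have hNNTN : trace (N * Nᵀ * N) = 0 := by
    rw [trace_mul_comm, ← mul_assoc, hN, zero_mul, trace_zero]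
  have hNTNNT : trace (Nᵀ * N * Nᵀ) = 0 := by
    rw [trace_mul_comm, ← mul_assoc, hNT, zero_mul, trace_zero]
  rw [hexp, hN, hNT, zero_mul, mul_zero, add_zero, sub_zero, add_zero]
  simp only [trace_add, trace_sub, trace_smul, trace_one, trace_transpose, trace_zero, hNNTN,
    hNTNNT, trace_mul_comm Nᵀ N]
  simp only [nsmul_eq_mul]
  push_cast
  ring

theorem det_X_smul_one_sub_add_transpose [IsReduced R] (hN : N * N = 0) :
    det ((X : R[X]) • (1 - N).map C + (1 - N)ᵀ.map C) = (-((1 + N) * (1 - Nᵀ))).charpoly := by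
  have hinv : (1 - N) * (1 + N) = 1 := by
    rw [sub_mul, one_mul, mul_add, mul_one, hN, add_zero, add_sub_cancel_right]
  have hCD : (1 - N) * ((1 + N) * (1 - Nᵀ)) = (1 - N)ᵀ := by
    rw [← mul_assoc, hinv, one_mul, transpose_sub, transpose_one]
  rw [← hCD, det_X_smul_add_mul, det_one_sub_of_isNilpotent ⟨2, by rwa [sq]⟩, C_1, one_mul]

end SquareZero

end Matrix

theorem Nat.two_mul_choose_two_sub_one {d : ℕ} (hd : 1 ≤ d) :
    2 * ((d - 1).choose 2 : ℤ) = d ^ 2 - 3 * d + 2 := by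
  obtain ⟨k, rfl⟩ := Nat.exists_eq_add_of_le' hd
  qify
  rw [Nat.add_sub_cancel, Nat.cast_choose_two]
  ring

namespace SimpleGraph

variable {V : Type*} [Fintype V] {G : SimpleGraph V} [DecidableRel G.Adj]

theorem adjMatrix_mul_self_apply [DecidableEq V] {α : Type*} [NonAssocSemiring α] (i j : V) :
    (G.adjMatrix α * G.adjMatrix α) i j = #(G.neighborFinset i ∩ G.neighborFinset j) := by
  rw [adjMatrix_mul_apply, ← filter_mem_eq_inter]
  simp [adjMatrix_apply, sum_boole, adj_comm]

theorem IsAcyclic.card_neighborFinset_inter_le_one [DecidableEq V] (hG : G.IsAcyclic) {i j : V}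
    (hij : i ≠ j) :
    #(G.neighborFinset i ∩ G.neighborFinset j) ≤ 1 := by
  refine card_le_one.mpr fun k hk l hl => ?_
  simp only [mem_inter, mem_neighborFinset] at hk hl
  let p : G.Path i j := ⟨.cons hk.1 (.cons hk.2.symm .nil), by simp [hk.1.ne, hk.2.ne', hij]⟩
  let q : G.Path i j := ⟨.cons hl.1 (.cons hl.2.symm .nil), by simp [hl.1.ne, hl.2.ne', hij]⟩
  have hpq : p = q := (hG.subsingleton_path i j).elim p q
  simpa [p, q] using congr_arg (fun r : G.Path i j => r.1.support) hpq

theorem sum_sum_adjMatrix_mul_self_apply :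
    ∑ i, ∑ j, (G.adjMatrix ℤ * G.adjMatrix ℤ) i j = ∑ i, (G.degree i : ℤ) ^ 2 := by
  calc ∑ i, ∑ j, (G.adjMatrix ℤ * G.adjMatrix ℤ) i j
      = 1 ⬝ᵥ ((G.adjMatrix ℤ * G.adjMatrix ℤ) *ᵥ 1) := by simp [dotProduct, mulVec]
    _ = (1 ᵥ* G.adjMatrix ℤ) ⬝ᵥ (G.adjMatrix ℤ *ᵥ 1) := by
      rw [← mulVec_mulVec, dotProduct_mulVec]
    _ = ∑ i, (G.degree i : ℤ) ^ 2 := by simp [dotProduct, sq]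

theorem IsAcyclic.trace_adjMatrix_sq_sq (hG : G.IsAcyclic) :
    trace (G.adjMatrix ℤ * G.adjMatrix ℤ * (G.adjMatrix ℤ * G.adjMatrix ℤ)) =
      2 * ∑ i, (G.degree i : ℤ) ^ 2 - ∑ i, (G.degree i : ℤ) := by
  classical
  have hsum := G.sum_sum_adjMatrix_mul_self_apply
  set B := G.adjMatrix ℤ * G.adjMatrix ℤ
  have hB : ∀ i j,
      B i j * B j i = B i j + if i = j then (G.degree i : ℤ) ^ 2 - G.degree i else 0 := by
    intro i j
    rcases eq_or_ne i j with rfl | hij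
    · rw [if_pos rfl, show B i i = G.degree i from G.adjMatrix_mul_self_apply_self i]
      ring
    · rw [if_neg hij, add_zero, show B i j = _ from adjMatrix_mul_self_apply i j,
        show B j i = _ from adjMatrix_mul_self_apply j i, inter_comm (G.neighborFinset j)]
      rcases Nat.le_one_iff_eq_zero_or_eq_one.mp (hG.card_neighborFinset_inter_le_one hij) with
        h | h <;> simp [h]
  simp only [trace, diag_apply, mul_apply (M := B), hB, sum_add_distrib, sum_ite_eq, mem_univ,
    if_true, hsum, sum_sub_distrib]
  ring

theorem trace_adjMatrix_mul_self :
    trace (G.adjMatrix ℤ * G.adjMatrix ℤ) = 2 * #G.edgeFinset := by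
  simp only [trace, diag_apply, adjMatrix_mul_self_apply_self]
  exact_mod_cast G.sum_degrees_eq_twice_card_edges

section Orientation

variable [DecidableEq V] {N : Matrix V V ℤ}

theorem trace_mul_transpose_eq_card_edgeFinset (hNA : N + Nᵀ = G.adjMatrix ℤ) (hN : N * N = 0) :
    trace (N * Nᵀ) = #G.edgeFinset := by
  have h := trace_add_transpose_mul_self hN
  rw [hNA, trace_adjMatrix_mul_self] at h
  linarith

theorem IsAcyclic.trace_mul_transpose_sq (hG : G.IsAcyclic) (hNA : N + Nᵀ = G.adjMatrix ℤ)
    (hN : N * N = 0) :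
    trace (N * Nᵀ * (N * Nᵀ)) = ∑ i, (G.degree i : ℤ) ^ 2 - #G.edgeFinset := by
  have h := trace_add_transpose_mul_self_sq hN
  have hdeg : ∑ i, (G.degree i : ℤ) = 2 * #G.edgeFinset := by
    exact_mod_cast G.sum_degrees_eq_twice_card_edges
  rw [hNA, hG.trace_adjMatrix_sq_sq, hdeg] at h
  linarith

theorem IsTree.trace_one_add_mul_one_sub_transpose (hT : G.IsTree) (hNA : N + Nᵀ = G.adjMatrix ℤ)
    (hN : N * N = 0) : trace ((1 + N) * (1 - Nᵀ)) = 1 := by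
  rw [Matrix.trace_one_add_mul_one_sub_transpose, trace_mul_transpose_eq_card_edgeFinset hNA hN,
    ← hT.card_edgeFinset]
  push_cast
  ring

theorem IsTree.trace_one_add_mul_one_sub_transpose_sq (hT : G.IsTree)
    (hNA : N + Nᵀ = G.adjMatrix ℤ) (hN : N * N = 0) :
    trace ((1 + N) * (1 - Nᵀ) * ((1 + N) * (1 - Nᵀ))) =
      ∑ i, (G.degree i : ℤ) ^ 2 - 4 * Fintype.card V + 5 := by
  rw [Matrix.trace_one_add_mul_one_sub_transpose_sq hN,
    trace_mul_transpose_eq_card_edgeFinset hNA hN, hT.isAcyclic.trace_mul_transpose_sq hNA hN,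
    ← hT.card_edgeFinset]
  push_cast
  ring

end Orientation

theorem IsTree.two_mul_sum_choose_two_degree_sub_one [Nontrivial V] (hT : G.IsTree) :
    2 * ∑ i, ((G.degree i - 1).choose 2 : ℤ) =
      ∑ i, (G.degree i : ℤ) ^ 2 - 4 * Fintype.card V + 6 := by
  classical
  have hdeg : ∑ i, (G.degree i : ℤ) + 2 = 2 * Fintype.card V := by
    rw [← hT.card_edgeFinset]
    exact_mod_cast congr_arg (· + 2) G.sum_degrees_eq_twice_card_edges
  rw [mul_sum, sum_congr rfl fun i _ =>
    Nat.two_mul_choose_two_sub_one (hT.connected.preconnected.degree_pos_of_nontrivial i)]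
  simp only [sum_add_distrib, sum_sub_distrib, ← mul_sum, sum_const, card_univ, nsmul_eq_mul]
  linear_combination (-3 : ℤ) * hdeg

end SimpleGraph

theorem coxeter_coeffs_tree_general (n : ℕ) (hn : 2 ≤ n) (G : SimpleGraph (Fin n))
    [DecidableRel G.Adj] (hT : G.IsTree) (N : Matrix (Fin n) (Fin n) ℤ)
    (hNA : N + Nᵀ = G.adjMatrix ℤ) (hN2 : N * N = 0) :
    let C : Matrix (Fin n) (Fin n) ℤ := 1 - N
    let φ : ℤ[X] := ((X : ℤ[X]) • C.map Polynomial.C + Cᵀ.map Polynomial.C).det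
    φ.coeff (n - 1) = 1 ∧
      φ.coeff (n - 2) = 1 - ∑ i, ((G.degree i - 1).choose 2 : ℤ) := by
  intro C φ
  have hφ : φ = (-((1 + N) * (1 - Nᵀ))).charpoly := det_X_smul_one_sub_add_transpose hN2
  have hcard : 2 ≤ Fintype.card (Fin n) := by rwa [Fintype.card_fin]
  have : Nontrivial (Fin n) := Fin.nontrivial_iff_two_le.mpr hn
  constructor
  · have h := trace_eq_neg_charpoly_coeff (-((1 + N) * (1 - Nᵀ)))
    rw [Fintype.card_fin, trace_neg, hT.trace_one_add_mul_one_sub_transpose hNA hN2] at h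
    rw [hφ]
    linarith
  · have h := two_mul_charpoly_coeff_card_sub_two (-((1 + N) * (1 - Nᵀ))) hcard
    rw [Fintype.card_fin, trace_neg, neg_sq, neg_mul_neg,
      hT.trace_one_add_mul_one_sub_transpose hNA hN2,
      hT.trace_one_add_mul_one_sub_transpose_sq hNA hN2, Fintype.card_fin] at h
    have hchoose := hT.two_mul_sum_choose_two_degree_sub_one
    rw [Fintype.card_fin] at hchoose
    rw [hφ]
    linarith

/-- Corollary 1.3 (Happel): the first two coefficients of the Coxeter polynomial of a
tree `T` on `n ≥ 2` vertices are `a₁ = 1` and `a₂ = 1 - ∑ᵢ C(dᵢ - 1, 2)`, computed via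
a bipartite orientation `N` of the tree. -/
theorem coxeter_coeffs_tree (n : ℕ) (hn : 2 ≤ n) (G : SimpleGraph (Fin n))
    [DecidableRel G.Adj] (hT : G.IsTree) (N : Matrix (Fin n) (Fin n) ℤ)
    (h01 : ∀ i j, N i j = 0 ∨ N i j = 1)
    (hNA : N + Nᵀ = G.adjMatrix ℤ) (hN2 : N * N = 0) :
    let C : Matrix (Fin n) (Fin n) ℤ := 1 - N
    let φ : ℤ[X] := ((X : ℤ[X]) • C.map Polynomial.C + Cᵀ.map Polynomial.C).det
    φ.coeff (n - 1) = 1 ∧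
      φ.coeff (n - 2) = 1 - ∑ i, ((G.degree i - 1).choose 2 : ℤ) :=
  coxeter_coeffs_tree_general n hn G hT N hNA hN2
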